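/- For every n ≥ 1 and every permutation P of {1,…,k^n}, there is a permutation σ of {1,…,k^{2n}} attainable from k^{2n} chips that contains a subsequence order-isomorphic to P: there exist positions i_1 < i_2 < ⋯ < i_{k^n} such that for all a, b, σ(i_a) < σ(i_b) if and only if P(a) < P(b). -/
import Mathlib


/-- A firing step for `N` labeled chips on the infinite directed `k`-ary tree with
vertex set `{1, 2, 3, …}`, root `1`, where the `j`-th child (`1 ≤ j ≤ k`) of vertex `v`
is `k*(v-1)+j+1`.  A configuration assigns to each chip (element of `Fin N`,
representing labels `1,…,N`) a vertex.  A step picks `k` chips `t 0 < t 1 < ⋯ < t (k-1)`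
all on a common vertex `v` and sends the `j`-th smallest to the `j`-th child. -/
def FireStep (k N : ℕ) (c c' : Fin N → ℕ) : Prop :=
  ∃ (v : ℕ) (t : Fin k → Fin N),
    StrictMono t ∧
    (∀ j, c (t j) = v) ∧
    (∀ j : Fin k, c' (t j) = k * (v - 1) + (j : ℕ) + 2) ∧
    (∀ i : Fin N, (∀ j, i ≠ t j) → c' i = c i)

/-- Reachable from the initial configuration of `k^ℓ` chips all on the root. -/
def Reachable (k ℓ : ℕ) (c : Fin (k ^ ℓ) → ℕ) : Prop :=
  Relation.ReflTransGen (FireStep k (k ^ ℓ)) (fun _ => 1) c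

/-- A configuration is stable if every vertex holds fewer than `k` chips. -/
def Stable (k N : ℕ) (c : Fin N → ℕ) : Prop :=
  ∀ v : ℕ, (Finset.univ.filter (fun i => c i = v)).card < k

/-- `layerStart k m` is the leftmost (smallest-numbered) vertex on layer `m+1`;
the vertices of layer `m+1` read left to right are `layerStart k m + p` for `0 ≤ p < k^m`. -/
def layerStart (k : ℕ) : ℕ → ℕ
  | 0 => 1
  | m + 1 => k * (layerStart k m - 1) + 2

/-- `σ` is the permutation associated to some reachable stable configuration of `k^ℓ`
chips: `σ p` (0-based, representing label `σ p + 1`) is the chip on the `p`-th leftmost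
vertex of layer `ℓ+1`. -/
def Attainable (k ℓ : ℕ) (σ : Equiv.Perm (Fin (k ^ ℓ))) : Prop :=
  ∃ c : Fin (k ^ ℓ) → ℕ, Reachable k ℓ c ∧ Stable k (k ^ ℓ) c ∧
    ∀ p : Fin (k ^ ℓ), c (σ p) = layerStart k ℓ + (p : ℕ)

/-- Reverse the `ℓ` lowest base-`k` digits of `x`. -/
def revN (k : ℕ) : ℕ → ℕ → ℕ
  | 0, _ => 0
  | ℓ + 1, x => x % k * k ^ ℓ + revN k ℓ (x / k)

lemma revN_lt (k : ℕ) (hk : 1 ≤ k) : ∀ ℓ x, revN k ℓ x < k ^ ℓ := by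
  intro ℓ
  induction ℓ with
  | zero => intro x; simp [revN]
  | succ ℓ ih =>
    intro x
    have h1 : x % k < k := Nat.mod_lt _ hk
    have := ih (x / k)
    calc x % k * k ^ ℓ + revN k ℓ (x / k) < x % k * k ^ ℓ + k ^ ℓ := by omega
    _ ≤ k * k ^ ℓ := by nlinarith
    _ = k ^ (ℓ + 1) := by ring

lemma digit_unique {K a b c d : ℕ} (hb : b < K) (hd : d < K)
    (h : a * K + b = c * K + d) : a = c ∧ b = d := by
  have hK : 0 < K := by omega
  have ha : (a * K + b) / K = a := by
    rw [mul_comm, Nat.mul_add_div hK, Nat.div_eq_of_lt hb]; omega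
  have hc : (c * K + d) / K = c := by
    rw [mul_comm, Nat.mul_add_div hK, Nat.div_eq_of_lt hd]; omega
  have hac : a = c := by rw [← ha, ← hc, h]
  subst hac
  omega

lemma revN_inj (k : ℕ) (hk : 1 ≤ k) : ∀ ℓ x y, x < k ^ ℓ → y < k ^ ℓ →
    revN k ℓ x = revN k ℓ y → x = y := by
  intro ℓ
  induction ℓ with
  | zero => intro x y hx hy _; simp at hx hy; omega
  | succ ℓ ih =>
    intro x y hx hy h
    simp only [revN] at h
    have h1 : revN k ℓ (x / k) < k ^ ℓ := revN_lt k hk ℓ _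
    have h2 : revN k ℓ (y / k) < k ^ ℓ := revN_lt k hk ℓ _
    obtain ⟨hm, hr⟩ := digit_unique h1 h2 h
    have hxk : x / k < k ^ ℓ := by
      apply Nat.div_lt_of_lt_mul; rw [pow_succ] at hx; nlinarith
    have hyk : y / k < k ^ ℓ := by
      apply Nat.div_lt_of_lt_mul; rw [pow_succ] at hy; nlinarith
    have hd := ih _ _ hxk hyk hr
    have e1 := Nat.div_add_mod x k
    have e2 := Nat.div_add_mod y k
    rw [hd, hm] at e1
    omega

/-- Splitting lemma: reversal of `q * k^ℓ + r`. -/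
lemma revN_split (k : ℕ) (hk : 1 ≤ k) : ∀ ℓ ℓ' q r, r < k ^ ℓ →
    revN k (ℓ + ℓ') (q * k ^ ℓ + r) = revN k ℓ r * k ^ ℓ' + revN k ℓ' q := by
  intro ℓ
  induction ℓ with
  | zero =>
    intro ℓ' q r hr
    have : r = 0 := by simpa using hr
    subst this
    simp [revN]
  | succ ℓ ih =>
    intro ℓ' q r hr
    have hadd : ℓ + 1 + ℓ' = (ℓ + ℓ') + 1 := by omega
    rw [hadd]
    simp only [revN]
    have hk0 : 0 < k := hk
    have hmod : (q * k ^ (ℓ + 1) + r) % k = r % k := by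
      rw [pow_succ, show q * (k ^ ℓ * k) + r = r + (q * k ^ ℓ) * k by ring,
        Nat.add_mul_mod_self_right]
    have hdiv : (q * k ^ (ℓ + 1) + r) / k = q * k ^ ℓ + r / k := by
      rw [pow_succ, show q * (k ^ ℓ * k) + r = r + (q * k ^ ℓ) * k by ring,
        Nat.add_mul_div_right _ _ hk0]
      omega
    rw [hmod, hdiv, ih ℓ' q (r / k) (by
      apply Nat.div_lt_of_lt_mul; rw [pow_succ] at hr; nlinarith)]
    rw [pow_add]
    ring

/-- `layerStart`-like definition for the subtree rooted at `u`. -/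
def subStart (k u : ℕ) : ℕ → ℕ
  | 0 => u
  | m + 1 => k * (subStart k u m - 1) + 2

lemma one_le_subStart (k u : ℕ) (hu : 1 ≤ u) : ∀ m, 1 ≤ subStart k u m := by
  intro m
  cases m with
  | zero => exact hu
  | succ m => simp [subStart]

lemma subStart_add (k u : ℕ) (hu : 1 ≤ u) : ∀ m a,
    subStart k (u + a) m = subStart k u m + a * k ^ m := by
  intro m
  induction m with
  | zero => intro a; simp [subStart]
  | succ m ih =>
    intro a
    have h1 := one_le_subStart k u hu m
    simp only [subStart, ih a]
    rw [pow_succ]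
    have : subStart k u m + a * k ^ m - 1 = (subStart k u m - 1) + a * k ^ m := by omega
    rw [this]
    ring

lemma subStart_succ_eq (k u : ℕ) : ∀ m,
    subStart k u (m + 1) = subStart k (k * (u - 1) + 2) m := by
  intro m
  induction m with
  | zero => rfl
  | succ m ih => simp only [subStart] at *; rw [← ih]

/-- Fire a vertex `u` holding all chips in the range of `e` until it is empty;
afterwards chip `e x` sits on child `x % k` of `u`. -/
lemma fire_batches (k N ℓ : ℕ) (hk : 2 ≤ k) (u : ℕ)
    (e : Fin (k ^ (ℓ + 1)) → Fin N) (he : StrictMono e)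
    (c0 : Fin N → ℕ) (hc0 : ∀ x, c0 (e x) = u) :
    ∀ b, b ≤ k ^ ℓ → ∃ c1, Relation.ReflTransGen (FireStep k N) c0 c1 ∧
      (∀ x : Fin (k ^ (ℓ + 1)), (x : ℕ) < b * k →
        c1 (e x) = k * (u - 1) + (x : ℕ) % k + 2) ∧
      (∀ x : Fin (k ^ (ℓ + 1)), b * k ≤ (x : ℕ) → c1 (e x) = u) ∧
      (∀ i, (∀ x, e x ≠ i) → c1 i = c0 i) := by
  have hinj : Function.Injective e := he.injective
  intro b
  induction b with
  | zero =>
    intro _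
    exact ⟨c0, Relation.ReflTransGen.refl, fun x hx => by omega, fun x _ => hc0 x,
      fun i _ => rfl⟩
  | succ b ih =>
    intro hb
    obtain ⟨c1, hrtg, hdone, hwait, hout⟩ := ih (by omega)
    have hbk : (b + 1) * k = b * k + k := by ring
    have hbord : ∀ j : Fin k, b * k + (j : ℕ) < k ^ (ℓ + 1) := by
      intro j
      have h1 : (j : ℕ) < k := j.isLt
      have h2 : (b + 1) * k ≤ k ^ ℓ * k := Nat.mul_le_mul_right k hb
      rw [pow_succ]
      omega
    set idx : Fin k → Fin (k ^ (ℓ + 1)) := fun j => ⟨b * k + (j : ℕ), hbord j⟩ with hidx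
    have hidxmono : StrictMono idx := by
      intro a b hab
      simp only [hidx, Fin.mk_lt_mk]
      have : (a : ℕ) < (b : ℕ) := hab
      omega
    set t : Fin k → Fin N := fun j => e (idx j) with ht
    classical
    set c2 : Fin N → ℕ := fun i =>
      if h : ∃ j : Fin k, e (idx j) = i then k * (u - 1) + (h.choose : ℕ) + 2 else c1 i
      with hc2
    have hkey : ∀ j : Fin k, c2 (t j) = k * (u - 1) + (j : ℕ) + 2 := by
      intro j
      have hex : ∃ j' : Fin k, e (idx j') = t j := ⟨j, rfl⟩
      have hch : hex.choose = j := by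
        have hs := hex.choose_spec
        have h2 : idx hex.choose = idx j := hinj hs
        exact hidxmono.injective h2
      simp only [hc2, dif_pos hex, hch]
    have hother : ∀ i, (∀ j : Fin k, i ≠ t j) → c2 i = c1 i := by
      intro i hi
      have : ¬ ∃ j : Fin k, e (idx j) = i := by
        rintro ⟨j, hj⟩
        exact hi j hj.symm
      simp only [hc2, dif_neg this]
    have hstep : FireStep k N c1 c2 := by
      refine ⟨u, t, he.comp hidxmono, ?_, hkey, hother⟩
      intro j
      exact hwait (idx j) (by simp [hidx])
    refine ⟨c2, hrtg.tail hstep, ?_, ?_, ?_⟩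
    · intro x hx
      by_cases hcase : (x : ℕ) < b * k
      · have hnot : ∀ j : Fin k, e x ≠ t j := by
          intro j hj
          have hxi : x = idx j := hinj hj
          have : (x : ℕ) = b * k + (j : ℕ) := by rw [hxi]
          omega
        rw [hother (e x) hnot]
        exact hdone x hcase
      · push_neg at hcase
        have hj : (x : ℕ) - b * k < k := by omega
        set jf : Fin k := ⟨(x : ℕ) - b * k, hj⟩ with hjf
        have hxeq : e x = t jf := by
          simp only [ht]
          congr 1
          apply Fin.ext
          simp only [hidx, hjf]
          omega
        have hmod : (x : ℕ) % k = (x : ℕ) - b * k := by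
          rw [show (x : ℕ) = ((x : ℕ) - b * k) + b * k by omega,
            Nat.add_mul_mod_self_right, Nat.mod_eq_of_lt hj]
          omega
        rw [hxeq, hkey jf]
        simp only [hjf]
        omega
    · intro x hx
      have hnot : ∀ j : Fin k, e x ≠ t j := by
        intro j hj
        have hxi : x = idx j := hinj hj
        have h1 : (x : ℕ) = b * k + (j : ℕ) := by rw [hxi]
        have h2 : (j : ℕ) < k := j.isLt
        omega
      rw [hother (e x) hnot]
      exact hwait x (by omega)
    · intro i hi
      have hnot : ∀ j : Fin k, i ≠ t j := by
        intro j hj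
        exact hi (idx j) hj.symm
      rw [hother i hnot]
      exact hout i hi

/-- Main reachability lemma: chips in the range of `e`, all sitting on `u`, can be
dispersed to the depth-`ℓ` descendants of `u` realizing the digit-reversal pattern. -/
lemma reach_rev (k : ℕ) (hk : 2 ≤ k) : ∀ ℓ N (u : ℕ), 1 ≤ u →
    ∀ (e : Fin (k ^ ℓ) → Fin N), StrictMono e →
    ∀ (c0 : Fin N → ℕ), (∀ x, c0 (e x) = u) →
    ∃ c1, Relation.ReflTransGen (FireStep k N) c0 c1 ∧
      (∀ x, c1 (e x) = subStart k u ℓ + revN k ℓ (x : ℕ)) ∧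
      (∀ i, (∀ x, e x ≠ i) → c1 i = c0 i) := by
  intro ℓ
  induction ℓ with
  | zero =>
    intro N u hu e he c0 hc0
    exact ⟨c0, Relation.ReflTransGen.refl,
      fun x => by simp [subStart, revN, hc0 x], fun i _ => rfl⟩
  | succ ℓ ih =>
    intro N u hu e he c0 hc0
    have hk1 : 1 ≤ k := by omega
    have hpow : k ^ (ℓ + 1) = k ^ ℓ * k := pow_succ k ℓ
    obtain ⟨cA, hrtgA, hAdone, _, hAout⟩ :=
      fire_batches k N ℓ hk u e he c0 hc0 (k ^ ℓ) le_rfl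
    have hA : ∀ x : Fin (k ^ (ℓ + 1)), cA (e x) = k * (u - 1) + (x : ℕ) % k + 2 := by
      intro x
      exact hAdone x (by rw [← hpow]; exact x.isLt)
    -- sweep over the children j = 0, …, k-1
    have claim : ∀ j, j ≤ k → ∃ c', Relation.ReflTransGen (FireStep k N) cA c' ∧
        (∀ x : Fin (k ^ (ℓ + 1)), (x : ℕ) % k < j →
          c' (e x) = subStart k (k * (u - 1) + (x : ℕ) % k + 2) ℓ +
            revN k ℓ ((x : ℕ) / k)) ∧
        (∀ x : Fin (k ^ (ℓ + 1)), j ≤ (x : ℕ) % k →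
          c' (e x) = k * (u - 1) + (x : ℕ) % k + 2) ∧
        (∀ i, (∀ x, e x ≠ i) → c' i = cA i) := by
      intro j
      induction j with
      | zero =>
        intro _
        exact ⟨cA, Relation.ReflTransGen.refl, fun x hx => by omega,
          fun x _ => hA x, fun i _ => rfl⟩
      | succ j ihj =>
        intro hjk
        obtain ⟨c', hrtg', h1, h2, h3⟩ := ihj (by omega)
        have ebound : ∀ i : Fin (k ^ ℓ), (i : ℕ) * k + j < k ^ (ℓ + 1) := by
          intro i
          have h4 : ((i : ℕ) + 1) * k ≤ k ^ ℓ * k := Nat.mul_le_mul_right k i.isLt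
          have h5 : ((i : ℕ) + 1) * k = (i : ℕ) * k + k := by ring
          omega
        set ej : Fin (k ^ ℓ) → Fin N := fun i => e ⟨(i : ℕ) * k + j, ebound i⟩ with hej
        have hejmono : StrictMono ej := by
          intro a b hab
          apply he
          simp only [Fin.mk_lt_mk]
          have h4 : ((a : ℕ) + 1) * k ≤ (b : ℕ) * k :=
            Nat.mul_le_mul_right k hab
          have h5 : ((a : ℕ) + 1) * k = (a : ℕ) * k + k := by ring
          omega
        have hmodj : ∀ i : Fin (k ^ ℓ), ((i : ℕ) * k + j) % k = j := by
          intro i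
          rw [mul_comm, Nat.mul_add_mod, Nat.mod_eq_of_lt (by omega)]
        have hdivj : ∀ i : Fin (k ^ ℓ), ((i : ℕ) * k + j) / k = (i : ℕ) := by
          intro i
          rw [mul_comm, Nat.mul_add_div (by omega), Nat.div_eq_of_lt (by omega)]
          omega
        have hpre : ∀ i : Fin (k ^ ℓ), c' (ej i) = k * (u - 1) + j + 2 := by
          intro i
          have := h2 ⟨(i : ℕ) * k + j, ebound i⟩ (by simp [hmodj i])
          simpa [hej, hmodj i] using this
        obtain ⟨c'', hrtg'', hmain'', hout''⟩ :=
          ih N (k * (u - 1) + j + 2) (by omega) ej hejmono c' hpre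
        have hnotrange : ∀ x : Fin (k ^ (ℓ + 1)), (x : ℕ) % k ≠ j →
            (∀ i : Fin (k ^ ℓ), ej i ≠ e x) := by
          intro x hx i hi
          have hxi : (⟨(i : ℕ) * k + j, ebound i⟩ : Fin (k ^ (ℓ + 1))) = x :=
            he.injective hi
          apply hx
          rw [← hxi]
          exact hmodj i
        refine ⟨c'', hrtg'.trans hrtg'', ?_, ?_, ?_⟩
        · intro x hx
          by_cases hcase : (x : ℕ) % k = j
          · have hidiv : (x : ℕ) / k < k ^ ℓ := by
              apply Nat.div_lt_of_lt_mul
              rw [mul_comm, ← hpow]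
              exact x.isLt
            have hxe : e x = ej ⟨(x : ℕ) / k, hidiv⟩ := by
              simp only [hej]
              congr 1
              apply Fin.ext
              simp only
              have := Nat.div_add_mod (x : ℕ) k
              rw [mul_comm, ← hcase]
              omega
            rw [hxe, hmain'' ⟨(x : ℕ) / k, hidiv⟩]
            simp [hcase]
          · have h5 := hout'' (e x) (hnotrange x hcase)
            rw [h5]
            exact h1 x (by omega)
        · intro x hx
          have h5 := hout'' (e x) (hnotrange x (by omega))
          rw [h5]
          exact h2 x (by omega)
        · intro i hi
          have h5 := hout'' i (fun i' => hi _)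
          rw [h5]
          exact h3 i hi
    obtain ⟨c1, hrtg1, hmain1, _, hout1⟩ := claim k le_rfl
    refine ⟨c1, hrtgA.trans hrtg1, ?_, fun i hi => by rw [hout1 i hi]; exact hAout i hi⟩
    intro x
    have hxmod : (x : ℕ) % k < k := Nat.mod_lt _ (by omega)
    rw [hmain1 x hxmod]
    have e1 : k * (u - 1) + (x : ℕ) % k + 2 = (k * (u - 1) + 2) + (x : ℕ) % k := by omega
    rw [e1, subStart_add k (k * (u - 1) + 2) (by omega) ℓ ((x : ℕ) % k),
      ← subStart_succ_eq k u ℓ]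
    have e2 : revN k (ℓ + 1) (x : ℕ) = (x : ℕ) % k * k ^ ℓ + revN k ℓ ((x : ℕ) / k) := rfl
    omega

lemma revN_invol (k : ℕ) (hk : 1 ≤ k) : ∀ ℓ x, x < k ^ ℓ →
    revN k ℓ (revN k ℓ x) = x := by
  intro ℓ
  induction ℓ with
  | zero => intro x hx; simp at hx; simp [revN, hx]
  | succ ℓ ih =>
    intro x hx
    have hr : revN k ℓ (x / k) < k ^ ℓ := revN_lt k hk ℓ _
    have hxdiv : x / k < k ^ ℓ := by
      apply Nat.div_lt_of_lt_mul; rw [pow_succ] at hx; nlinarith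
    have h1 : revN k (ℓ + 1) x = x % k * k ^ ℓ + revN k ℓ (x / k) := rfl
    rw [h1, revN_split k hk ℓ 1 (x % k) _ hr, ih _ hxdiv]
    have h2 : revN k 1 (x % k) = x % k := by
      simp [revN, Nat.mod_eq_of_lt (Nat.mod_lt x hk)]
    rw [h2, pow_one]
    have := Nat.div_add_mod x k
    rw [mul_comm] at this
    omega

lemma block_lt_iff {m pa pb s t : ℕ} (hs : s < m) (ht : t < m) :
    pa * m + s < pb * m + t ↔ (pa < pb ∨ (pa = pb ∧ s < t)) := by
  rcases Nat.lt_trichotomy pa pb with h | h | h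
  · have h2 : (pa + 1) * m ≤ pb * m := Nat.mul_le_mul_right m h
    have h3 : (pa + 1) * m = pa * m + m := by ring
    constructor
    · intro; left; exact h
    · intro; omega
  · subst h
    constructor
    · intro h4; right; exact ⟨rfl, by omega⟩
    · rintro (h4 | ⟨-, h4⟩) <;> omega
  · have h2 : (pb + 1) * m ≤ pa * m := Nat.mul_le_mul_right m h
    have h3 : (pb + 1) * m = pb * m + m := by ring
    constructor
    · intro; omega
    · rintro (h4 | ⟨h4, -⟩) <;> omega

lemma layerStart_eq_subStart (k : ℕ) : ∀ m, layerStart k m = subStart k 1 m := by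
  intro m
  induction m with
  | zero => rfl
  | succ m ih => simp [layerStart, subStart, ih]

/-- For every permutation `P` of `{1,…,k^n}`, some permutation attainable from `k^(2n)`
chips contains a subsequence order-isomorphic to `P`. -/
theorem stmt5 (k n : ℕ) (hk : 2 ≤ k) (hn : 1 ≤ n) (P : Equiv.Perm (Fin (k ^ n))) :
    ∃ σ : Equiv.Perm (Fin (k ^ (2 * n))), Attainable k (2 * n) σ ∧
      ∃ pos : Fin (k ^ n) → Fin (k ^ (2 * n)), StrictMono pos ∧
        ∀ a b : Fin (k ^ n), σ (pos a) < σ (pos b) ↔ P a < P b := by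
  classical
  have hk1 : 1 ≤ k := by omega
  have hMm : k ^ (2 * n) = k ^ n * k ^ n := by rw [two_mul, pow_add]
  set L := layerStart k (2 * n) with hL
  set c : Fin (k ^ (2 * n)) → ℕ := fun x => L + revN k (2 * n) (x : ℕ) with hc
  obtain ⟨c1, hrtg, hmain, -⟩ :=
    reach_rev k hk (2 * n) (k ^ (2 * n)) 1 le_rfl (fun x => x) (fun a b h => h)
      (fun _ => 1) (fun _ => rfl)
  have hc1 : c1 = c := by
    funext x
    rw [hmain x, hc, hL, layerStart_eq_subStart]
  have hcinj : Function.Injective c := by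
    intro x y hxy
    simp only [hc] at hxy
    exact Fin.ext (revN_inj k hk1 (2 * n) x y x.isLt y.isLt (by omega))
  set revFin : Fin (k ^ (2 * n)) → Fin (k ^ (2 * n)) :=
    fun x => ⟨revN k (2 * n) (x : ℕ), revN_lt k hk1 _ _⟩ with hrevFin
  have hrinj : Function.Injective revFin := by
    intro x y hxy
    exact Fin.ext (revN_inj k hk1 (2 * n) x y x.isLt y.isLt (congrArg Fin.val hxy))
  have hrbij := Finite.injective_iff_bijective.mp hrinj
  set E := Equiv.ofBijective revFin hrbij with hE
  have hbound : ∀ (q r : Fin (k ^ n)), (q : ℕ) * k ^ n + revN k n (r : ℕ) < k ^ (2 * n) := by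
    intro q r
    have h1 : revN k n (r : ℕ) < k ^ n := revN_lt k hk1 _ _
    have h2 : ((q : ℕ) + 1) * k ^ n ≤ k ^ n * k ^ n := Nat.mul_le_mul_right _ q.isLt
    have h3 : ((q : ℕ) + 1) * k ^ n = (q : ℕ) * k ^ n + k ^ n := by ring
    rw [hMm]
    omega
  set pos : Fin (k ^ n) → Fin (k ^ (2 * n)) :=
    fun a => ⟨(a : ℕ) * k ^ n + revN k n ((P a : ℕ)), hbound a (P a)⟩ with hpos
  set xa : Fin (k ^ n) → Fin (k ^ (2 * n)) :=
    fun a => ⟨(P a : ℕ) * k ^ n + revN k n (a : ℕ), hbound (P a) a⟩ with hxa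
  have key : ∀ a, E.symm (pos a) = xa a := by
    intro a
    have h1 : E (xa a) = pos a := by
      apply Fin.ext
      show revN k (2 * n) ((P a : ℕ) * k ^ n + revN k n (a : ℕ)) =
        (a : ℕ) * k ^ n + revN k n (P a : ℕ)
      rw [two_mul, revN_split k hk1 n n (P a : ℕ) _ (revN_lt k hk1 _ _),
        revN_invol k hk1 n _ a.isLt]
    rw [← h1, Equiv.symm_apply_apply]
  refine ⟨E.symm, ⟨c, ?_, ?_, ?_⟩, pos, ?_, ?_⟩
  · rw [← hc1]
    exact hrtg
  · intro v
    have hle : (Finset.univ.filter (fun i => c i = v)).card ≤ 1 := by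
      apply Finset.card_le_one.mpr
      intro a ha b hb
      simp only [Finset.mem_filter] at ha hb
      exact hcinj (ha.2.trans hb.2.symm)
    omega
  · intro p
    have h1 : revFin (E.symm p) = p := E.apply_symm_apply p
    have h2 : revN k (2 * n) ((E.symm p : Fin (k ^ (2 * n))) : ℕ) = (p : ℕ) :=
      congrArg Fin.val h1
    simp only [hc]
    rw [h2]
  · intro a b hab
    simp only [hpos, Fin.mk_lt_mk]
    have h1 : revN k n (P a : ℕ) < k ^ n := revN_lt k hk1 _ _
    have h2 : ((a : ℕ) + 1) * k ^ n ≤ (b : ℕ) * k ^ n := Nat.mul_le_mul_right _ hab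
    have h3 : ((a : ℕ) + 1) * k ^ n = (a : ℕ) * k ^ n + k ^ n := by ring
    omega
  · intro a b
    rw [key a, key b]
    have hiff := block_lt_iff (m := k ^ n) (pa := (P a : ℕ)) (pb := (P b : ℕ))
      (revN_lt k hk1 n (a : ℕ)) (revN_lt k hk1 n (b : ℕ))
    simp only [hxa, Fin.mk_lt_mk]
    rw [hiff, Fin.lt_def]
    constructor
    · rintro (h | ⟨h4, h5⟩)
      · exact h
      · have : P a = P b := Fin.ext h4
        have hab : a = b := P.injective this
        subst hab
        omega
    · intro h
      exact Or.inl h
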